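/- Let (Z,(X,Y)) be a hidden Markov model with Z aperiodic, irreducible, finite-state, initial distribution μ, transition matrix P, and stationary distribution π, and suppose some letter has positive probability of being simultaneously emitted by X and Y. Then for every K with 0 < K < n, |E[LCS(X^{(n)}; Y^{(n)})] - E[LCS(X̄^{(n)}; Ȳ^{(n)})]| ≤ n·P(τ > K) + K, where (X̄, Ȳ) is the output of the stationary version Z̄ of the chain coupled with Z, and τ is the meeting time of Z and Z̄. -/

import Mathlib

open MeasureTheory

/-!
On the event `τ ≤ K` the two pairs of words agree from position `K + 1` on, and replacing the
first `K` letters of both words of a pair changes their LCS by at most `K`, since at most `K`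
letters of a common subsequence can come from those prefixes. On the event `τ > K` both LCS values
lie in `[0, n]`. Integrating the pointwise bound `K + n · 1{τ > K}` gives the claim.
-/

/-- Length of the longest common subsequence of two words. -/
def LCS {α : Type*} [DecidableEq α] (x y : List α) : ℕ :=
  ((x.sublists.filter (fun s => decide (s.Sublist y))).map List.length).foldr max 0

/-- The word `X_a, …, X_{a+len-1}` of the (1-indexed) sequence `X`. -/
def word {α : Type*} (X : ℕ → α) (a len : ℕ) : List α :=
  (List.range len).map (fun i => X (a + i))

theorem List.Sublist.drop_length_append {α : Type*} {s a t : List α} (h : s.Sublist (a ++ t)) :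
    (s.drop a.length).Sublist t := by
  simpa using h.drop a.length

section LongestCommonSubsequence

variable {α : Type*} [DecidableEq α]

theorem le_LCS {s x y : List α} (hx : s.Sublist x) (hy : s.Sublist y) :
    s.length ≤ LCS x y :=
  List.le_max_of_le (List.mem_map.2 ⟨s, by simp [hx, hy], rfl⟩) le_rfl

theorem LCS_le {x y : List α} {m : ℕ}
    (h : ∀ s : List α, s.Sublist x → s.Sublist y → s.length ≤ m) : LCS x y ≤ m := by
  refine List.max_le_of_forall_le _ _ fun k hk => ?_
  simp only [List.mem_map, List.mem_filter, List.mem_sublists, decide_eq_true_eq] at hk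
  obtain ⟨s, ⟨hx, hy⟩, rfl⟩ := hk
  exact h s hx hy

theorem LCS_le_LCS_append (a b t u : List α) : LCS t u ≤ LCS (a ++ t) (b ++ u) :=
  LCS_le fun _ ht hu =>
    le_LCS (ht.trans (List.sublist_append_right a t)) (hu.trans (List.sublist_append_right b u))

theorem LCS_append_le_length_add {a b t u : List α} (hab : a.length = b.length) :
    LCS (a ++ t) (b ++ u) ≤ a.length + LCS t u :=
  LCS_le fun s hx hy => by
    have := le_LCS hx.drop_length_append (hab ▸ hy.drop_length_append)
    rw [List.length_drop] at this
    omega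

theorem LCS_append_le_LCS_append_add {a b : List α} (a' b' t u : List α)
    (hab : a.length = b.length) :
    LCS (a ++ t) (b ++ u) ≤ LCS (a' ++ t) (b' ++ u) + a.length := by
  have := LCS_le_LCS_append a' b' t u
  have := LCS_append_le_length_add (t := t) (u := u) hab
  omega

theorem LCS_le_length_left (x y : List α) : LCS x y ≤ x.length :=
  LCS_le fun _ hx _ => hx.length_le

end LongestCommonSubsequence

section Word

variable {α : Type*}

@[simp]
theorem length_word (X : ℕ → α) (a n : ℕ) : (word X a n).length = n := by
  simp [word]

theorem word_add (X : ℕ → α) (a m k : ℕ) :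
    word X a (m + k) = word X a m ++ word X (a + m) k := by
  simp [word, List.range_add, Nat.add_assoc]

theorem word_congr {X X' : ℕ → α} {a n : ℕ} (h : ∀ i < n, X (a + i) = X' (a + i)) :
    word X a n = word X' a n :=
  List.map_congr_left fun i hi => h i (List.mem_range.1 hi)

theorem word_eq_ofFn (X : ℕ → α) (a n : ℕ) :
    word X a n = List.ofFn fun i : Fin n => X (a + i) :=
  List.ext_getElem (by simp) fun _ _ _ => by simp [word]

end Word

/-- With `K = n` the agreement hypothesis is vacuous, giving the trivial bound `n`. -/
theorem abs_LCS_word_sub_LCS_word_le {α : Type*} [DecidableEq α] {x y x' y' : ℕ → α}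
    {K n : ℕ} (hKn : K ≤ n) (h : ∀ i, K < i → i ≤ n → x i = x' i ∧ y i = y' i) :
    |(LCS (word x 1 n) (word y 1 n) : ℝ) - LCS (word x' 1 n) (word y' 1 n)| ≤ K := by
  obtain ⟨m, rfl⟩ := Nat.exists_eq_add_of_le hKn
  have htail : ∀ i < m, x (1 + K + i) = x' (1 + K + i) ∧ y (1 + K + i) = y' (1 + K + i) :=
    fun i hi => h _ (by omega) (by omega)
  simp only [word_add, word_congr fun i hi => (htail i hi).1,
    word_congr fun i hi => (htail i hi).2]
  have h₁ := LCS_append_le_LCS_append_add (word x' 1 K) (word y' 1 K)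
    (word x' (1 + K) m) (word y' (1 + K) m) (a := word x 1 K) (b := word y 1 K) (by simp)
  have h₂ := LCS_append_le_LCS_append_add (word x 1 K) (word y 1 K)
    (word x' (1 + K) m) (word y' (1 + K) m) (a := word x' 1 K) (b := word y' 1 K) (by simp)
  rw [length_word] at h₁ h₂
  have c₁ := (Nat.cast_le (α := ℝ)).2 h₁
  have c₂ := (Nat.cast_le (α := ℝ)).2 h₂
  push_cast at c₁ c₂
  rw [abs_sub_le_iff]
  constructor <;> linarith

section Integrability

variable {Ω α : Type*} [MeasurableSpace Ω] [DecidableEq α] [Countable α] [MeasurableSpace α]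
  [MeasurableSingletonClass α] {X Y : ℕ → Ω → α}

theorem measurable_LCS_word (hX : ∀ i, Measurable (X i)) (hY : ∀ i, Measurable (Y i))
    (a n : ℕ) :
    Measurable fun ω => (LCS (word (fun i => X i ω) a n) (word (fun i => Y i ω) a n) : ℝ) := by
  have hXY : Measurable fun ω => (fun i : Fin n => X (a + i) ω, fun i : Fin n => Y (a + i) ω) :=
    (measurable_pi_lambda _ fun _ => hX _).prodMk (measurable_pi_lambda _ fun _ => hY _)
  have := (measurable_of_countable
    fun p : (Fin n → α) × (Fin n → α) => (LCS (List.ofFn p.1) (List.ofFn p.2) : ℝ)).comp hXY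
  simpa only [Function.comp_def, word_eq_ofFn] using this

theorem integrable_LCS_word {μ : Measure Ω} [IsFiniteMeasure μ]
    (hX : ∀ i, Measurable (X i)) (hY : ∀ i, Measurable (Y i)) (a n : ℕ) :
    Integrable (fun ω => (LCS (word (fun i => X i ω) a n) (word (fun i => Y i ω) a n) : ℝ)) μ :=
  .of_bound (measurable_LCS_word hX hY a n).aestronglyMeasurable n <| .of_forall fun ω => by
    simpa using LCS_le_length_left (word (fun i => X i ω) a n) (word (fun i => Y i ω) a n)

end Integrability

/-- `s` need not be measurable: the bound passes to its measurable hull `toMeasurable μ s`. -/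
theorem abs_integral_sub_le_of_abs_sub_le_indicator_add {Ω : Type*} [MeasurableSpace Ω]
    {μ : Measure Ω} [IsProbabilityMeasure μ] {f g : Ω → ℝ} (hf : Integrable f μ)
    (hg : Integrable g μ) {s : Set Ω} {c K : ℝ} (hc : 0 ≤ c)
    (h : ∀ ω, |f ω - g ω| ≤ s.indicator (fun _ => c) ω + K) :
    |∫ ω, f ω ∂μ - ∫ ω, g ω ∂μ| ≤ c * μ.real s + K := by
  set t := toMeasurable μ s
  have hind : Integrable (t.indicator fun _ => c) μ :=
    (integrable_indicator_iff (measurableSet_toMeasurable μ s)).2 integrableOn_const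
  have hbound : ∀ ω, |f ω - g ω| ≤ t.indicator (fun _ => c) ω + K := fun ω =>
    (h ω).trans <| add_le_add_left
      (Set.indicator_le_indicator_of_subset (subset_toMeasurable μ s) (fun _ => hc) ω) K
  calc |∫ ω, f ω ∂μ - ∫ ω, g ω ∂μ| = |∫ ω, (f ω - g ω) ∂μ| := by rw [integral_sub hf hg]
    _ ≤ ∫ ω, |f ω - g ω| ∂μ := abs_integral_le_integral_abs
    _ ≤ ∫ ω, (t.indicator (fun _ => c) ω + K) ∂μ :=
        integral_mono (hf.sub hg).abs (hind.add (integrable_const K)) hbound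
    _ = c * μ.real s + K := by
        rw [integral_add hind (integrable_const K), integral_indicator_const _
          (measurableSet_toMeasurable μ s)]
        simp [Measure.real, measure_toMeasurable, mul_comm]

theorem hmm_coupling_mean_difference_bound_general
    {Ω A : Type*} [MeasurableSpace Ω]
    [Fintype A] [DecidableEq A] [MeasurableSpace A] [MeasurableSingletonClass A]
    (ℙ : Measure Ω) [IsProbabilityMeasure ℙ]
    (X Y Xb Yb : ℕ → Ω → A)
    (hX : ∀ i, Measurable (X i)) (hY : ∀ i, Measurable (Y i))
    (hXb : ∀ i, Measurable (Xb i)) (hYb : ∀ i, Measurable (Yb i))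
    (τ : Ω → ℕ∞)
    -- the emissions coincide strictly after the meeting time
    (hcoup : ∀ (ω : Ω) (i : ℕ), τ ω < (i : ℕ∞) → X i ω = Xb i ω ∧ Y i ω = Yb i ω) :
    ∀ (n K : ℕ), 0 < K → K < n →
      |(∫ ω, ((LCS (word (fun i => X i ω) 1 n) (word (fun i => Y i ω) 1 n) : ℝ)) ∂ℙ)
        - ∫ ω, ((LCS (word (fun i => Xb i ω) 1 n) (word (fun i => Yb i ω) 1 n) : ℝ)) ∂ℙ|
      ≤ (n : ℝ) * (ℙ {ω | (K : ℕ∞) < τ ω}).toReal + K := by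
  intro n K _ hKn
  refine abs_integral_sub_le_of_abs_sub_le_indicator_add (integrable_LCS_word hX hY 1 n)
    (integrable_LCS_word hXb hYb 1 n) n.cast_nonneg fun ω => ?_
  by_cases hω : ω ∈ {ω | (K : ℕ∞) < τ ω}
  · rw [Set.indicator_of_mem hω]
    have hn := abs_LCS_word_sub_LCS_word_le (x := fun i => X i ω) (y := fun i => Y i ω)
      (x' := fun i => Xb i ω) (y' := fun i => Yb i ω) (le_refl n)
      fun i hni hin => absurd hin hni.not_ge
    linarith [(K.cast_nonneg : (0 : ℝ) ≤ K)]
  · rw [Set.indicator_of_notMem hω, zero_add]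
    exact abs_LCS_word_sub_LCS_word_le hKn.le fun i hKi _ =>
      hcoup ω i ((not_lt.1 hω).trans_lt (by exact_mod_cast hKi))

/-- Coupling bound: if `(Z̄, (X̄, Ȳ))` is the stationary version of the hidden Markov
model `(Z, (X, Y))`, coupled with it so that the two hidden chains (and their
emissions) coincide after the meeting time `τ`, then for every `0 < K < n`,
`|E[LCS(X⁽ⁿ⁾; Y⁽ⁿ⁾)] - E[LCS(X̄⁽ⁿ⁾; Ȳ⁽ⁿ⁾)]| ≤ n·P(τ > K) + K`. -/
theorem hmm_coupling_mean_difference_bound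
    {Ω S A : Type*} [MeasurableSpace Ω]
    [Fintype S] [DecidableEq S] [MeasurableSpace S] [MeasurableSingletonClass S]
    [Fintype A] [DecidableEq A] [MeasurableSpace A] [MeasurableSingletonClass A]
    (ℙ : Measure Ω) [IsProbabilityMeasure ℙ]
    (Z Zb : ℕ → Ω → S) (X Y Xb Yb : ℕ → Ω → A)
    (hZ : ∀ i, Measurable (Z i)) (hZb : ∀ i, Measurable (Zb i))
    (hX : ∀ i, Measurable (X i)) (hY : ∀ i, Measurable (Y i))
    (hXb : ∀ i, Measurable (Xb i)) (hYb : ∀ i, Measurable (Yb i))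
    (τ : Ω → ℕ∞) (hτmeas : Measurable τ)
    -- `τ` is the meeting time of the two hidden chains
    (hτ : ∀ (ω : Ω) (i : ℕ), τ ω ≤ (i : ℕ∞) ↔ ∃ j, 1 ≤ j ∧ j ≤ i ∧ Z j ω = Zb j ω)
    -- the hidden chains coincide after the meeting time
    (hchain : ∀ (ω : Ω) (i : ℕ), τ ω ≤ (i : ℕ∞) → Z i ω = Zb i ω)
    -- the emissions coincide strictly after the meeting time
    (hcoup : ∀ (ω : Ω) (i : ℕ), τ ω < (i : ℕ∞) → X i ω = Xb i ω ∧ Y i ω = Yb i ω) :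
    ∀ (n K : ℕ), 0 < K → K < n →
      |(∫ ω, ((LCS (word (fun i => X i ω) 1 n) (word (fun i => Y i ω) 1 n) : ℝ)) ∂ℙ)
        - ∫ ω, ((LCS (word (fun i => Xb i ω) 1 n) (word (fun i => Yb i ω) 1 n) : ℝ)) ∂ℙ|
      ≤ (n : ℝ) * (ℙ {ω | (K : ℕ∞) < τ ω}).toReal + K :=
  hmm_coupling_mean_difference_bound_general ℙ X Y Xb Yb hX hY hXb hYb τ hcoup
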